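/- Let K be a field and u ∈ Kˣ; set v = u². Fix an integer n ≥ 2. Let M_n be the free K-module with basis {u⃗_d}_{d ∈ ℤ}. For each residue i ∈ ℤ/nℤ define K-linear endomorphisms of M_n by: F_i(u⃗_d) = u·u⃗_{d+1} if d + i ≡ 0 (mod n) and 0 otherwise; E_i(u⃗_d) = u⁻¹·u⃗_{d−1} if d + i ≡ 1 (mod n) and 0 otherwise; K_i^{±1}(u⃗_d) = v^{±(𝟙[d+i ≡ 0 (mod n)] − 𝟙[d+i ≡ 1 (mod n)])}·u⃗_d. Then for all i, j ∈ ℤ/nℤ: (i) (v − v⁻¹)·(E_i ∘ F_j − F_j ∘ E_i) = δ_{ij}·(K_i − K_i^{−1}); (ii) any two of the K_i^{±1} commute; (iii) K_i ∘ E_j ∘ K_i^{−1} = v^{a_{ij}}·E_j and K_i ∘ F_j ∘ K_i^{−1} = v^{−a_{ij}}·F_j, where a_{ij} = 2·𝟙[i = j] − 𝟙[i = j+1] − 𝟙[i = j−1] computed in ℤ/nℤ (the entries of the affine Cartan matrix Â_{n−1}). -/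

import Mathlib

/-!
All operators are monomial in the basis `u⃗_d`, so each relation is checked on one basis vector.
`K_i` scales `u⃗_d` by `v ^ weight (d + i)`, where `weight r = 𝟙[r = 0] − 𝟙[r = 1]`. The
commutator `E_i F_j − F_j E_i` kills `u⃗_d` unless `i = j`, and then scales it by
`k = weight (d + i) ∈ {−1, 0, 1}`, for which `(v − v⁻¹) k = v ^ k − v ^ (−k)`. Conjugation by
`K_i` multiplies `E_j` (resp. `F_j`) by `v` to the change of weight along its step
`d ↦ d − 1` (resp. `d ↦ d + 1`); since the step only happens when `d + j ≡ 1` (resp. `0`), that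
change is a function of `i − j`, namely `a_{ij}` (resp. `−a_{ij}`).
-/

/-- The operator `F_i` on the free module with basis `{u⃗_d}_{d∈ℤ}`:
`F_i(u⃗_d) = u·u⃗_{d+1}` if `d + i ≡ 0 (mod n)`, and `0` otherwise. -/
noncomputable def FopZ {K : Type*} [Field K] (u : Kˣ) (n : ℕ) (i : ZMod n) :
    (ℤ →₀ K) →ₗ[K] (ℤ →₀ K) :=
  Finsupp.lsum K fun d =>
    if (d : ZMod n) + i = 0 then (u : K) • Finsupp.lsingle (d + 1) else 0

/-- The operator `E_i`: `E_i(u⃗_d) = u⁻¹·u⃗_{d−1}` if `d + i ≡ 1 (mod n)`, and `0` otherwise. -/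
noncomputable def EopZ {K : Type*} [Field K] (u : Kˣ) (n : ℕ) (i : ZMod n) :
    (ℤ →₀ K) →ₗ[K] (ℤ →₀ K) :=
  Finsupp.lsum K fun d =>
    if (d : ZMod n) + i = 1 then ((u⁻¹ : Kˣ) : K) • Finsupp.lsingle (d - 1) else 0

/-- The operator `K_i^s` (for `s = ±1`):
`K_i^s(u⃗_d) = v^{s·(𝟙[d+i≡0] − 𝟙[d+i≡1])}·u⃗_d`, where `v = u²`. -/
noncomputable def KopZ {K : Type*} [Field K] (u : Kˣ) (n : ℕ) (i : ZMod n) (s : ℤ) :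
    (ℤ →₀ K) →ₗ[K] (ℤ →₀ K) :=
  Finsupp.lsum K fun d =>
    ((((u ^ 2) ^ (s * ((if (d : ZMod n) + i = 0 then 1 else 0) -
        (if (d : ZMod n) + i = 1 then 1 else 0)))) : Kˣ) : K) • Finsupp.lsingle d

theorem sub_inv_mul_intCast_eq_zpow_sub_zpow_neg {R : Type*} [DivisionRing R] (x : R) {k : ℤ}
    (hk : k = -1 ∨ k = 0 ∨ k = 1) : (x - x⁻¹) * k = x ^ k - x ^ (-k) := by
  rcases hk with rfl | rfl | rfl <;> simp

namespace FundamentalRep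

variable {n : ℕ}

def weight (r : ZMod n) : ℤ :=
  (if r = 0 then 1 else 0) - (if r = 1 then 1 else 0)

theorem weight_mem (r : ZMod n) : weight r = -1 ∨ weight r = 0 ∨ weight r = 1 := by
  unfold weight; split_ifs <;> simp

def affineCartan (i j : ZMod n) : ℤ :=
  2 * (if i = j then 1 else 0) - (if i = j + 1 then 1 else 0) - (if i = j - 1 then 1 else 0)

theorem affineCartan_eq_weight_sub_weight (i j : ZMod n) :
    affineCartan i j = weight (i - j) - weight (i - j + 1) := by
  have h₁ : i - j = 1 ↔ i = j + 1 := eq_iff_eq_of_sub_eq_sub (by abel)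
  have h₂ : i - j + 1 = 0 ↔ i = j - 1 := eq_iff_eq_of_sub_eq_sub (by abel)
  have h₃ : i - j + 1 = 1 ↔ i = j := eq_iff_eq_of_sub_eq_sub (by abel)
  simp only [affineCartan, weight, sub_eq_zero, h₁, h₂, h₃]
  split_ifs <;> omega

variable {K : Type*} [Field K] (u : Kˣ)

open Finsupp

theorem FopZ_single (i : ZMod n) (d : ℤ) (c : K) :
    FopZ u n i (single d c) =
      if (d : ZMod n) + i = 0 then single (d + 1) ((u : K) * c) else 0 := by
  rw [FopZ, lsum_single]
  split_ifs <;> simp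

theorem EopZ_single (i : ZMod n) (d : ℤ) (c : K) :
    EopZ u n i (single d c) =
      if (d : ZMod n) + i = 1 then single (d - 1) ((u : K)⁻¹ * c) else 0 := by
  rw [EopZ, lsum_single]
  split_ifs <;> simp

theorem KopZ_single (i : ZMod n) (s d : ℤ) (c : K) :
    KopZ u n i s (single d c) =
      (((u ^ 2) ^ (s * weight ((d : ZMod n) + i)) : Kˣ) : K) • single d c :=
  lsum_single ..

theorem EopZ_FopZ_single (i j : ZMod n) (d : ℤ) (c : K) :
    EopZ u n i (FopZ u n j (single d c)) =
      if (d : ZMod n) + j = 0 ∧ (d : ZMod n) + i = 0 then single d c else 0 := by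
  rw [FopZ_single]
  by_cases hj : (d : ZMod n) + j = 0
  · have hi : ((d + 1 : ℤ) : ZMod n) + i = 1 ↔ (d : ZMod n) + i = 0 :=
      eq_iff_eq_of_sub_eq_sub (by push_cast; abel)
    simp only [hj, if_true, EopZ_single, hi, true_and, add_sub_cancel_right,
      inv_mul_cancel_left₀ u.ne_zero]
  · simp only [hj, if_false, false_and, map_zero]

theorem FopZ_EopZ_single (i j : ZMod n) (d : ℤ) (c : K) :
    FopZ u n j (EopZ u n i (single d c)) =
      if (d : ZMod n) + i = 1 ∧ (d : ZMod n) + j = 1 then single d c else 0 := by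
  rw [EopZ_single]
  by_cases hi : (d : ZMod n) + i = 1
  · have hj : ((d - 1 : ℤ) : ZMod n) + j = 0 ↔ (d : ZMod n) + j = 1 :=
      eq_iff_eq_of_sub_eq_sub (by push_cast; abel)
    simp only [hi, if_true, FopZ_single, hj, true_and, sub_add_cancel,
      mul_inv_cancel_left₀ u.ne_zero]
  · simp only [hi, if_false, false_and, map_zero]

theorem commutator_EopZ_FopZ_single (i j : ZMod n) (d : ℤ) (c : K) :
    (EopZ u n i ∘ₗ FopZ u n j - FopZ u n j ∘ₗ EopZ u n i) (single d c) =
      if i = j then (weight ((d : ZMod n) + i) : K) • single d c else 0 := by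
  simp only [LinearMap.sub_apply, LinearMap.comp_apply, EopZ_FopZ_single, FopZ_EopZ_single]
  by_cases hij : i = j
  · subst hij
    simp only [and_self, weight, if_true]
    split_ifs <;> simp
  · have h₀ : ¬((d : ZMod n) + j = 0 ∧ (d : ZMod n) + i = 0) := fun h ↦
      hij (add_left_cancel (h.2.trans h.1.symm))
    have h₁ : ¬((d : ZMod n) + i = 1 ∧ (d : ZMod n) + j = 1) := fun h ↦
      hij (add_left_cancel (h.1.trans h.2.symm))
    simp only [h₀, h₁, hij, if_false, sub_zero]

theorem sub_inv_smul_commutator_EopZ_FopZ (i j : ZMod n) :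
    ((u : K) ^ 2 - ((u : K) ^ 2)⁻¹) • (EopZ u n i ∘ₗ FopZ u n j - FopZ u n j ∘ₗ EopZ u n i) =
      if i = j then KopZ u n i 1 - KopZ u n i (-1) else 0 := by
  refine lhom_ext fun d c ↦ ?_
  rw [LinearMap.smul_apply, commutator_EopZ_FopZ_single]
  split_ifs with hij
  · rw [LinearMap.sub_apply, KopZ_single, KopZ_single, smul_smul, ← sub_smul]
    simp only [Units.val_zpow_eq_zpow_val, Units.val_pow_eq_pow_val, one_mul, neg_one_mul]
    rw [sub_inv_mul_intCast_eq_zpow_sub_zpow_neg _ (weight_mem _)]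
  · rw [smul_zero, LinearMap.zero_apply]

theorem KopZ_comp_comm (i j : ZMod n) (s t : ℤ) :
    KopZ u n i s ∘ₗ KopZ u n j t = KopZ u n j t ∘ₗ KopZ u n i s := by
  refine lhom_ext fun d c ↦ ?_
  simp only [LinearMap.comp_apply, KopZ_single, map_smul, smul_smul, mul_comm]

theorem KopZ_conj_apply_single {T : (ℤ →₀ K) →ₗ[K] (ℤ →₀ K)} (i : ZMod n) {d e : ℤ} {k : K}
    (hT : ∀ c, T (single d c) = single e (k * c)) (c : K) :
    KopZ u n i 1 (T (KopZ u n i (-1) (single d c))) =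
      (((u ^ 2) ^ (weight ((e : ZMod n) + i) - weight ((d : ZMod n) + i)) : Kˣ) : K) •
        T (single d c) := by
  rw [KopZ_single, map_smul, hT, map_smul, KopZ_single, smul_smul, ← Units.val_mul,
    ← zpow_add]
  congr 3
  ring

theorem KopZ_comp_EopZ_comp_KopZ_neg (i j : ZMod n) :
    KopZ u n i 1 ∘ₗ EopZ u n j ∘ₗ KopZ u n i (-1) =
      (((u ^ 2) ^ affineCartan i j : Kˣ) : K) • EopZ u n j := by
  refine lhom_ext fun d c ↦ ?_
  rw [LinearMap.comp_apply, LinearMap.comp_apply, LinearMap.smul_apply]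
  by_cases hd : (d : ZMod n) + j = 1
  · rw [KopZ_conj_apply_single u i fun c ↦ by rw [EopZ_single, if_pos hd],
      affineCartan_eq_weight_sub_weight]
    have h₁ : ((d - 1 : ℤ) : ZMod n) + i = i - j := by push_cast; linear_combination hd
    have h₂ : (d : ZMod n) + i = i - j + 1 := by linear_combination hd
    rw [h₁, h₂]
  · simp only [KopZ_single, map_smul, EopZ_single, if_neg hd, smul_zero, map_zero]

theorem KopZ_comp_FopZ_comp_KopZ_neg (i j : ZMod n) :
    KopZ u n i 1 ∘ₗ FopZ u n j ∘ₗ KopZ u n i (-1) =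
      (((u ^ 2) ^ (-affineCartan i j) : Kˣ) : K) • FopZ u n j := by
  refine lhom_ext fun d c ↦ ?_
  rw [LinearMap.comp_apply, LinearMap.comp_apply, LinearMap.smul_apply]
  by_cases hd : (d : ZMod n) + j = 0
  · rw [KopZ_conj_apply_single u i fun c ↦ by rw [FopZ_single, if_pos hd],
      affineCartan_eq_weight_sub_weight, neg_sub]
    have h₁ : ((d + 1 : ℤ) : ZMod n) + i = i - j + 1 := by push_cast; linear_combination hd
    have h₂ : (d : ZMod n) + i = i - j := by linear_combination hd
    rw [h₁, h₂]
  · simp only [KopZ_single, map_smul, FopZ_single, if_neg hd, smul_zero, map_zero]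

end FundamentalRep

theorem fundamental_rep_relations_general {K : Type*} [Field K] (u : Kˣ) (n : ℕ) :
    (∀ i j : ZMod n,
      ((u : K) ^ 2 - ((u : K) ^ 2)⁻¹) •
          (EopZ u n i ∘ₗ FopZ u n j - FopZ u n j ∘ₗ EopZ u n i) =
        if i = j then KopZ u n i 1 - KopZ u n i (-1) else 0) ∧
    (∀ i j : ZMod n, ∀ s t : ℤ, (s = 1 ∨ s = -1) → (t = 1 ∨ t = -1) →
      KopZ u n i s ∘ₗ KopZ u n j t = KopZ u n j t ∘ₗ KopZ u n i s) ∧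
    (∀ i j : ZMod n,
      (KopZ u n i 1 ∘ₗ EopZ u n j ∘ₗ KopZ u n i (-1) =
        ((((u ^ 2) ^ ((2 * (if i = j then 1 else 0) - (if i = j + 1 then 1 else 0) -
            (if i = j - 1 then 1 else 0) : ℤ))) : Kˣ) : K) • EopZ u n j) ∧
      (KopZ u n i 1 ∘ₗ FopZ u n j ∘ₗ KopZ u n i (-1) =
        ((((u ^ 2) ^ (-(2 * (if i = j then 1 else 0) - (if i = j + 1 then 1 else 0) -
            (if i = j - 1 then 1 else 0) : ℤ))) : Kˣ) : K) • FopZ u n j)) :=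
  ⟨FundamentalRep.sub_inv_smul_commutator_EopZ_FopZ u,
    fun i j s t _ _ ↦ FundamentalRep.KopZ_comp_comm u i j s t,
    fun i j ↦ ⟨FundamentalRep.KopZ_comp_EopZ_comp_KopZ_neg u i j,
      FundamentalRep.KopZ_comp_FopZ_comp_KopZ_neg u i j⟩⟩

/-- the Drinfeld–Jimbo relations hold on the fundamental representation
`𝕍_n = ⊕_{d∈ℤ} K·u⃗_d` of `U_υ(ĝl(n))` (`n ≥ 2`, `v = u²`):
(i) `(v − v⁻¹)(E_i F_j − F_j E_i) = δ_{ij}(K_i − K_i⁻¹)`;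
(ii) the `K_i^{±1}` commute;
(iii) `K_i E_j K_i⁻¹ = v^{a_{ij}} E_j` and `K_i F_j K_i⁻¹ = v^{−a_{ij}} F_j`, where
`a_{ij} = 2·𝟙[i=j] − 𝟙[i=j+1] − 𝟙[i=j−1]` in `ℤ/nℤ`. -/
theorem fundamental_rep_relations {K : Type*} [Field K] (u : Kˣ) (n : ℕ) (hn : 2 ≤ n) :
    (∀ i j : ZMod n,
      ((u : K) ^ 2 - ((u : K) ^ 2)⁻¹) •
          (EopZ u n i ∘ₗ FopZ u n j - FopZ u n j ∘ₗ EopZ u n i) =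
        if i = j then KopZ u n i 1 - KopZ u n i (-1) else 0) ∧
    (∀ i j : ZMod n, ∀ s t : ℤ, (s = 1 ∨ s = -1) → (t = 1 ∨ t = -1) →
      KopZ u n i s ∘ₗ KopZ u n j t = KopZ u n j t ∘ₗ KopZ u n i s) ∧
    (∀ i j : ZMod n,
      (KopZ u n i 1 ∘ₗ EopZ u n j ∘ₗ KopZ u n i (-1) =
        ((((u ^ 2) ^ ((2 * (if i = j then 1 else 0) - (if i = j + 1 then 1 else 0) -
            (if i = j - 1 then 1 else 0) : ℤ))) : Kˣ) : K) • EopZ u n j) ∧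
      (KopZ u n i 1 ∘ₗ FopZ u n j ∘ₗ KopZ u n i (-1) =
        ((((u ^ 2) ^ (-(2 * (if i = j then 1 else 0) - (if i = j + 1 then 1 else 0) -
            (if i = j - 1 then 1 else 0) : ℤ))) : Kˣ) : K) • FopZ u n j)) :=
  fundamental_rep_relations_general u n
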